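/- Let σ_α,…,σ_ω be an island of significant gadgets for the purchased minimum-cost s-t path P, and let p_{σ_i} denote the price of the P-edge of gadget σ_i. Then for all α ≤ i ≤ ω, in_i + p_{σ_i} + out_i ≤ 2(in_i + out_i + 1); in particular p_{σ_i} ≤ 2 + in_i + out_i. (The alternative path bypassing the two shortcuts and gadget σ_i using only fixed-cost edges of cost 2 has total cost 2(in_i + out_i + 1).) -/

import Mathlib

open scoped ENNReal

/-! ## Label cover instances -/

/-- A label cover instance: a bipartite graph `(V, W, E)` with edge list
`(ve i, we i)` for `i : Fin m`, a label set `Fin k`, and for every edge `i` a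
nonempty set `R i` of satisfying label pairs. -/
structure LabelCover where
  V : Type
  W : Type
  m : ℕ
  k : ℕ
  ve : Fin m → V
  we : Fin m → W
  R : Fin m → Finset (Fin k × Fin k)
  R_nonempty : ∀ i, (R i).Nonempty

namespace LabelCover

/-- The label assignment `(ℓv, ℓw)` satisfies edge `i`. -/
def Sat (I : LabelCover) (ℓv : I.V → Fin I.k) (ℓw : I.W → Fin I.k) (i : Fin I.m) : Prop :=
  (ℓv (I.ve i), ℓw (I.we i)) ∈ I.R i

instance (I : LabelCover) (ℓv : I.V → Fin I.k) (ℓw : I.W → Fin I.k) :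
    DecidablePred (I.Sat ℓv ℓw) := fun i =>
  decidable_of_iff ((ℓv (I.ve i), ℓw (I.we i)) ∈ I.R i) Iff.rfl

/-- The number of edges satisfied by the assignment `(ℓv, ℓw)`. -/
def satCount (I : LabelCover) (ℓv : I.V → Fin I.k) (ℓw : I.W → Fin I.k) : ℕ :=
  (Finset.univ.filter (I.Sat ℓv ℓw)).card

/-- The label pairs `a` on edge `i` and `b` on edge `j` are conflicting. -/
def Conflict (I : LabelCover) (i j : Fin I.m) (a b : Fin I.k × Fin I.k) : Prop :=
  (I.ve i = I.ve j ∧ a.1 ≠ b.1) ∨ (I.we i = I.we j ∧ a.2 ≠ b.2)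

/-! ## The StackSP instance produced by the reduction -/

/-- The nodes of the StackSP instance: the gadget boundary nodes `bd i`
(`bd i.castSucc` is the left endpoint of gadget `i`, `bd i.succ` its right
endpoint; `bd 0 = s`, `bd (last m) = t`), and for every gadget `i` and label
pair `a` the tail `tl i a` and head `hd i a` of the pricable edge `e_{i,a}`. -/
inductive Node (m k : ℕ) where
  | bd (i : Fin (m + 1))
  | tl (i : Fin m) (a : Fin k × Fin k)
  | hd (i : Fin m) (a : Fin k × Fin k)
  deriving DecidableEq

/-- The edges of the StackSP instance: for every gadget `i` and label pair `a`,
the (fixed-cost 0) edge `enter i a` from the left endpoint of gadget `i` to the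
tail of the pricable edge `price i a`, the pricable edge itself, and the
(fixed-cost 0) edge `exit i a` from its head to the right endpoint of gadget `i`;
the parallel fixed-cost-2 edge `skip i` of gadget `i`; and the shortcut edge
`shortcut i j a b` of fixed cost `j - i - 1` from the head of `price i a` to
the tail of `price j b`. -/
inductive Edge (m k : ℕ) where
  | enter (i : Fin m) (a : Fin k × Fin k)
  | price (i : Fin m) (a : Fin k × Fin k)
  | exit (i : Fin m) (a : Fin k × Fin k)
  | skip (i : Fin m)
  | shortcut (i j : Fin m) (a b : Fin k × Fin k)
  deriving DecidableEq

namespace Edge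

/-- Source node of an edge (all edges are directed from left to right). -/
def src {m k : ℕ} : Edge m k → Node m k
  | enter i _ => .bd i.castSucc
  | price i a => .tl i a
  | exit i a => .hd i a
  | skip i => .bd i.castSucc
  | shortcut i _ a _ => .hd i a

/-- Destination node of an edge. -/
def dst {m k : ℕ} : Edge m k → Node m k
  | enter i a => .tl i a
  | price i a => .hd i a
  | exit i _ => .bd i.succ
  | skip i => .bd i.succ
  | shortcut _ j _ b => .tl j b

/-- The pricable edges. -/
def IsPricable {m k : ℕ} : Edge m k → Prop
  | price _ _ => True
  | _ => False

/-- The fixed cost of an edge: `2` for the parallel fixed edge of a gadget,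
`j - i - 1` for a shortcut from gadget `i` to gadget `j`, `0` otherwise
(pricable edges have fixed cost `0`). -/
noncomputable def fixedCost {m k : ℕ} : Edge m k → ℝ≥0∞
  | skip _ => 2
  | shortcut i j _ _ => (((j : ℕ) - (i : ℕ) - 1 : ℕ) : ℝ≥0∞)
  | _ => 0

/-- Whether an edge is a pricable edge of gadget `g` (as a `Bool`). -/
def isPricableOf {m k : ℕ} (g : Fin m) : Edge m k → Bool
  | price i _ => i == g
  | _ => false

end Edge

/-- The edges actually present in the StackSP instance built from `I`:
gadget `i` has edges only for the label pairs in `R i`, and a shortcut from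
gadget `i` to gadget `j` exists precisely when `i < j` and the corresponding
label pairs are conflicting. -/
def EdgeOK (I : LabelCover) : Edge I.m I.k → Prop
  | .enter i a => a ∈ I.R i
  | .price i a => a ∈ I.R i
  | .exit i a => a ∈ I.R i
  | .skip _ => True
  | .shortcut i j a b =>
      (i : ℕ) < (j : ℕ) ∧ a ∈ I.R i ∧ b ∈ I.R j ∧ I.Conflict i j a b

/-- A pricing assigns a nonnegative (possibly infinite) price to every
pricable edge `e_{i,a}`. -/
abbrev Pricing (I : LabelCover) := Fin I.m → Fin I.k × Fin I.k → ℝ≥0∞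

/-- The price contributed by an edge (the price of a pricable edge, `0` for a
fixed-cost edge). -/
noncomputable def priceOf (I : LabelCover) (p : Pricing I) : Edge I.m I.k → ℝ≥0∞
  | .price i a => p i a
  | _ => 0

/-- The total cost of an edge: fixed cost plus price. -/
noncomputable def edgeCost (I : LabelCover) (p : Pricing I) (e : Edge I.m I.k) : ℝ≥0∞ :=
  e.fixedCost + I.priceOf p e

/-- Directed walks in the StackSP instance of `I`, recorded as lists of
consecutive valid edges. -/
inductive Walk (I : LabelCover) : Node I.m I.k → Node I.m I.k → List (Edge I.m I.k) → Prop
  | nil (u : Node I.m I.k) : Walk I u u []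
  | cons {e : Edge I.m I.k} {v : Node I.m I.k} {es : List (Edge I.m I.k)} :
      I.EdgeOK e → Walk I e.dst v es → Walk I e.src v (e :: es)

/-- The source `s` of the instance: the left endpoint of gadget `1`. -/
def source (I : LabelCover) : Node I.m I.k := .bd 0

/-- The sink `t` of the instance: the right endpoint of gadget `m`. -/
def target (I : LabelCover) : Node I.m I.k := .bd (Fin.last I.m)

/-- Total cost (fixed costs plus prices) of a list of edges. -/
noncomputable def cost (I : LabelCover) (p : Pricing I) (es : List (Edge I.m I.k)) : ℝ≥0∞ :=
  (es.map (I.edgeCost p)).sum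

/-- Revenue of a list of edges: the sum of the prices of its pricable edges. -/
noncomputable def revenue (I : LabelCover) (p : Pricing I) (es : List (Edge I.m I.k)) : ℝ≥0∞ :=
  (es.map (I.priceOf p)).sum

/-- Total fixed cost of a list of edges. -/
noncomputable def fixedSum (I : LabelCover) (es : List (Edge I.m I.k)) : ℝ≥0∞ :=
  (es.map Edge.fixedCost).sum

/-- `P` is a minimum-cost directed `s`-`t` path under pricing `p`. -/
def IsOptPath (I : LabelCover) (p : Pricing I) (P : List (Edge I.m I.k)) : Prop :=
  Walk I I.source I.target P ∧
    ∀ Q, Walk I I.source I.target Q → I.cost p P ≤ I.cost p Q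

/-- `P` is the path purchased by the consumer: a minimum-cost `s`-`t` path
which, among minimum-cost paths, maximizes the revenue. -/
def IsPurchased (I : LabelCover) (p : Pricing I) (P : List (Edge I.m I.k)) : Prop :=
  I.IsOptPath p P ∧ ∀ Q, I.IsOptPath p Q → I.revenue p Q ≤ I.revenue p P

/-! ## P-edges, significant gadgets and islands -/

/-- Gadget `g` has a P-edge, i.e. `P` uses a pricable edge of gadget `g`. -/
def HasPEdge (I : LabelCover) (P : List (Edge I.m I.k)) (g : Fin I.m) : Prop :=
  ∃ a, Edge.price g a ∈ P

/-- Gadget `g'` has a P-edge that is joined to the P-edge `e_{g,a}` of gadget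
`g` by a shortcut edge (in particular `g < g'`). -/
def Linked (I : LabelCover) (P : List (Edge I.m I.k)) (g : Fin I.m)
    (a : Fin I.k × Fin I.k) (g' : Fin I.m) : Prop :=
  ∃ b, Edge.price g' b ∈ P ∧ I.EdgeOK (.shortcut g g' a b)

/-- Every pricable edge not on `P` has price `+∞` (the w.l.o.g. normalization). -/
def OffPathInfty (I : LabelCover) (p : Pricing I) (P : List (Edge I.m I.k)) : Prop :=
  ∀ g a, Edge.price g a ∉ P → p g a = ⊤

/-- The length `in_g` of the shortcut edge used by `P` to enter gadget `g`
(`0` if no shortcut is used). -/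
noncomputable def inLen (I : LabelCover) (P : List (Edge I.m I.k)) (g : Fin I.m) : ℕ :=
  if h : ∃ g' : Fin I.m, ∃ a b, Edge.shortcut g' g a b ∈ P then
    (g : ℕ) - (h.choose : ℕ) - 1
  else 0

/-- The length `out_g` of the shortcut edge used by `P` to exit gadget `g`
(`0` if no shortcut is used). -/
noncomputable def outLen (I : LabelCover) (P : List (Edge I.m I.k)) (g : Fin I.m) : ℕ :=
  if h : ∃ g' : Fin I.m, ∃ a b, Edge.shortcut g g' a b ∈ P then
    (h.choose : ℕ) - (g : ℕ) - 1
  else 0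

/-- `P` splits as `P1 ++ M ++ P2` where `P1` goes from `s` to `u`, `M` from `u`
to `v` and `P2` from `v` to `t`. -/
def SplitsAt (I : LabelCover) (P P1 M P2 : List (Edge I.m I.k))
    (u v : Node I.m I.k) : Prop :=
  P = P1 ++ M ++ P2 ∧ Walk I I.source u P1 ∧ Walk I u v M ∧ Walk I v I.target P2

/-- The sequence `σ 0 < σ 1 < … < σ (r-1)` of significant gadgets of the
purchased path `P`, together with the labels of their P-edges:
`σ 0` is the first gadget with a P-edge; given `σ i`, if some gadget beyond
`σ i` has a P-edge joined to the P-edge of `σ i` by a shortcut edge then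
`σ (i+1)` is the largest such gadget, and otherwise `σ i` is an end point and
`σ (i+1)` is the next gadget after `σ i` having a P-edge; the process stops at
`σ (r-1)`, which is an end point, with no P-edge beyond it. -/
structure SigSeq (I : LabelCover) (P : List (Edge I.m I.k)) where
  r : ℕ
  rpos : 0 < r
  σ : Fin r → Fin I.m
  lab : Fin r → Fin I.k × Fin I.k
  mono : StrictMono σ
  mem : ∀ i, Edge.price (σ i) (lab i) ∈ P
  first : ∀ g, I.HasPEdge P g → σ ⟨0, rpos⟩ ≤ g
  step : ∀ i : ℕ, ∀ h : i + 1 < r,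
    (I.Linked P (σ ⟨i, Nat.lt_of_succ_lt h⟩) (lab ⟨i, Nat.lt_of_succ_lt h⟩) (σ ⟨i + 1, h⟩) ∧
      ∀ g, I.Linked P (σ ⟨i, Nat.lt_of_succ_lt h⟩) (lab ⟨i, Nat.lt_of_succ_lt h⟩) g →
        g ≤ σ ⟨i + 1, h⟩) ∨
    ((¬ ∃ g, I.Linked P (σ ⟨i, Nat.lt_of_succ_lt h⟩) (lab ⟨i, Nat.lt_of_succ_lt h⟩) g) ∧
      I.HasPEdge P (σ ⟨i + 1, h⟩) ∧
      ∀ g, σ ⟨i, Nat.lt_of_succ_lt h⟩ < g → I.HasPEdge P g → σ ⟨i + 1, h⟩ ≤ g)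
  last : ¬ ∃ g, I.Linked P (σ ⟨r - 1, by omega⟩) (lab ⟨r - 1, by omega⟩) g
  cover : ∀ g, I.HasPEdge P g → g ≤ σ ⟨r - 1, by omega⟩

/-- Significant gadget `σ i` is an end point: no gadget has a P-edge joined to
the P-edge of `σ i` by a shortcut edge. -/
def SigSeq.IsEnd {I : LabelCover} {P : List (Edge I.m I.k)} (S : I.SigSeq P)
    (i : Fin S.r) : Prop :=
  ¬ ∃ g, I.Linked P (S.σ i) (S.lab i) g

/-- Significant gadget `σ i` is a start point: it is the first significant
gadget, or its predecessor is an end point. -/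
def SigSeq.IsStart {I : LabelCover} {P : List (Edge I.m I.k)} (S : I.SigSeq P)
    (i : Fin S.r) : Prop :=
  (i : ℕ) = 0 ∨ (0 < (i : ℕ) ∧ ∃ h : (i : ℕ) - 1 < S.r, S.IsEnd ⟨(i : ℕ) - 1, h⟩)

/-- `σ α, …, σ ω` is an island: `α` is a start point, `ω` is the next end
point after `α`. -/
def SigSeq.IsIsland {I : LabelCover} {P : List (Edge I.m I.k)} (S : I.SigSeq P)
    (α ω : Fin S.r) : Prop :=
  α ≤ ω ∧ S.IsStart α ∧ S.IsEnd ω ∧ ∀ i : Fin S.r, α ≤ i → i < ω → ¬ S.IsEnd i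

end LabelCover

/-! `P` is no more expensive than the detour that leaves it where the entering shortcut
starts, crosses the `in + out + 1` gadgets up to the end of the exiting shortcut on their
fixed edges of cost `2`, and rejoins `P` there; the edges connecting the detour to `P` are free. -/

namespace LabelCover

variable {I : LabelCover} (p : Pricing I)

lemma Walk.append {u v w : Node I.m I.k} {es fs : List (Edge I.m I.k)}
    (h₁ : I.Walk u v es) (h₂ : I.Walk v w fs) : I.Walk u w (es ++ fs) := by
  induction h₁ with
  | nil => simpa using h₂
  | cons hok _ ih => exact Walk.cons hok (ih h₂)

lemma Walk.single {e : Edge I.m I.k} (h : I.EdgeOK e) : I.Walk e.src e.dst [e] :=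
  Walk.cons h (Walk.nil _)

lemma Walk.edgeOK_of_mem {u v : Node I.m I.k} {es : List (Edge I.m I.k)}
    (h : I.Walk u v es) : ∀ e ∈ es, I.EdgeOK e := by
  induction h with
  | nil => simp
  | cons hok _ ih => exact List.forall_mem_cons.2 ⟨hok, ih⟩

@[simp]
lemma cost_nil : I.cost p [] = 0 := rfl

@[simp]
lemma cost_cons (e : Edge I.m I.k) (es : List (Edge I.m I.k)) :
    I.cost p (e :: es) = I.edgeCost p e + I.cost p es := by
  simp [cost]

@[simp]
lemma cost_append (es fs : List (Edge I.m I.k)) :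
    I.cost p (es ++ fs) = I.cost p es + I.cost p fs := by
  simp [cost]

@[simp]
lemma edgeCost_enter (g : Fin I.m) (a : Fin I.k × Fin I.k) :
    I.edgeCost p (.enter g a) = 0 := by
  simp [edgeCost, Edge.fixedCost, priceOf]

@[simp]
lemma edgeCost_price (g : Fin I.m) (a : Fin I.k × Fin I.k) :
    I.edgeCost p (.price g a) = p g a := by
  simp [edgeCost, Edge.fixedCost, priceOf]

@[simp]
lemma edgeCost_exit (g : Fin I.m) (a : Fin I.k × Fin I.k) :
    I.edgeCost p (.exit g a) = 0 := by
  simp [edgeCost, Edge.fixedCost, priceOf]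

@[simp]
lemma edgeCost_skip (g : Fin I.m) : I.edgeCost p (.skip g) = 2 := by
  simp [edgeCost, Edge.fixedCost, priceOf]

@[simp]
lemma edgeCost_shortcut (g g' : Fin I.m) (a b : Fin I.k × Fin I.k) :
    I.edgeCost p (.shortcut g g' a b) = ((g' - g - 1 : ℕ) : ℝ≥0∞) := by
  simp [edgeCost, Edge.fixedCost, priceOf]

lemma exists_walk_bd_cost_eq (n : ℕ) :
    ∀ x y : Fin (I.m + 1), (y : ℕ) = x + n →
      ∃ es, I.Walk (.bd x) (.bd y) es ∧ I.cost p es = 2 * n := by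
  induction n with
  | zero =>
    intro x y h
    obtain rfl : y = x := Fin.ext (by omega)
    exact ⟨[], Walk.nil _, by simp⟩
  | succ n ih =>
    intro x y h
    have hx : (x : ℕ) < I.m := by omega
    obtain ⟨es, hw, hc⟩ := ih ⟨x + 1, by omega⟩ y (by simp; omega)
    refine ⟨.skip ⟨x, hx⟩ :: es, Walk.cons (e := .skip ⟨x, hx⟩) trivial hw, ?_⟩
    rw [cost_cons, edgeCost_skip, hc]
    push_cast
    ring

lemma IsOptPath.cost_ne_top {P : List (Edge I.m I.k)} (hP : I.IsOptPath p P) :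
    I.cost p P ≠ ⊤ := by
  obtain ⟨Q, hQ, hcQ⟩ := exists_walk_bd_cost_eq p I.m 0 (Fin.last I.m) (by simp)
  refine ne_top_of_le_ne_top ?_ (hP.2 Q hQ)
  rw [hcQ]
  exact ENNReal.mul_ne_top (by simp) (ENNReal.natCast_ne_top _)

lemma IsOptPath.cost_le_of_splitsAt {P P₁ M P₂ Q : List (Edge I.m I.k)} {u v : Node I.m I.k}
    (hP : I.IsOptPath p P) (hs : I.SplitsAt P P₁ M P₂ u v) (hQ : I.Walk u v Q) :
    I.cost p M ≤ I.cost p Q := by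
  obtain ⟨rfl, h₁, -, h₂⟩ := hs
  have hfin := hP.cost_ne_top
  have hle := hP.2 _ ((h₁.append hQ).append h₂)
  simp only [cost_append, ENNReal.add_ne_top] at hfin hle
  rwa [ENNReal.add_le_add_iff_right hfin.2, ENNReal.add_le_add_iff_left hfin.1.1] at hle

lemma exists_free_walk_of_entering {g : Fin I.m} {b : Fin I.k × Fin I.k} {u : Node I.m I.k}
    {Min : List (Edge I.m I.k)} {inn : ℕ} (hok : ∀ e ∈ Min, I.EdgeOK e)
    (h : (Min = [.enter g b] ∧ inn = 0 ∧ u = .bd g.castSucc) ∨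
      ∃ g' a, Min = [.shortcut g' g a b] ∧ inn = (g : ℕ) - g' - 1 ∧ u = .hd g' a) :
    I.cost p Min = inn ∧ ∃ x : Fin (I.m + 1), (x : ℕ) + inn = g ∧
      ∃ es, I.Walk u (.bd x) es ∧ I.cost p es = 0 := by
  rcases h with ⟨rfl, rfl, rfl⟩ | ⟨g', a, rfl, rfl, rfl⟩
  · exact ⟨by simp, g.castSucc, by simp, [], Walk.nil _, rfl⟩
  · obtain ⟨hlt, ha, -⟩ := hok _ (List.mem_singleton_self _)
    exact ⟨by simp, g'.succ, by simp; omega, [.exit g' a], 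
      Walk.single (e := .exit g' a) ha, by simp⟩

lemma exists_free_walk_of_exiting {g : Fin I.m} {a : Fin I.k × Fin I.k} {v : Node I.m I.k}
    {Mout : List (Edge I.m I.k)} {out : ℕ} (hok : ∀ e ∈ Mout, I.EdgeOK e)
    (h : (Mout = [.exit g a] ∧ out = 0 ∧ v = .bd g.succ) ∨
      ∃ g' b, Mout = [.shortcut g g' a b] ∧ out = (g' : ℕ) - g - 1 ∧ v = .tl g' b) :
    I.cost p Mout = out ∧ ∃ y : Fin (I.m + 1), (y : ℕ) = g + out + 1 ∧
      ∃ es, I.Walk (.bd y) v es ∧ I.cost p es = 0 := by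
  rcases h with ⟨rfl, rfl, rfl⟩ | ⟨g', b, rfl, rfl, rfl⟩
  · exact ⟨by simp, g.succ, by simp, [], Walk.nil _, rfl⟩
  · obtain ⟨hlt, -, hb, -⟩ := hok _ (List.mem_singleton_self _)
    exact ⟨by simp, g'.castSucc, by simp; omega, [.enter g' b], 
      Walk.single (e := .enter g' b) hb, by simp⟩

end LabelCover

lemma ENNReal.le_two_add_add_of_add_add_le {a b c : ℝ≥0∞} (ha : a ≠ ⊤) (hb : b ≠ ⊤)
    (h : a + c + b ≤ 2 * (a + b + 1)) : c ≤ 2 + a + b := by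
  rw [← ENNReal.add_le_add_iff_left (ENNReal.add_ne_top.2 ⟨ha, hb⟩)]
  calc a + b + c = a + c + b := by ring
    _ ≤ 2 * (a + b + 1) := h
    _ = a + b + (2 + a + b) := by ring

open LabelCover

theorem stackSP_eqn2_general (I : LabelCover) (p : Pricing I) (P : List (Edge I.m I.k))
    (hP : I.IsPurchased p P) (S : I.SigSeq P) (i : Fin S.r)
    (P1 Min Mout P2 : List (Edge I.m I.k)) (inn out : ℕ) (u v : Node I.m I.k)
    (hsplit : I.SplitsAt P P1 (Min ++ [Edge.price (S.σ i) (S.lab i)] ++ Mout) P2 u v)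
    (hinn : (Min = [Edge.enter (S.σ i) (S.lab i)] ∧ inn = 0 ∧
        u = Node.bd (S.σ i).castSucc ∧
        ¬ ∃ (g : Fin I.m) (a : Fin I.k × Fin I.k),
          Edge.shortcut g (S.σ i) a (S.lab i) ∈ P) ∨
      (∃ (g : Fin I.m) (a : Fin I.k × Fin I.k),
        Min = [Edge.shortcut g (S.σ i) a (S.lab i)] ∧
        inn = ((S.σ i : Fin I.m) : ℕ) - (g : ℕ) - 1 ∧ u = Node.hd g a))
    (hout : (Mout = [Edge.exit (S.σ i) (S.lab i)] ∧ out = 0 ∧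
        v = Node.bd (S.σ i).succ ∧
        ¬ ∃ (g : Fin I.m) (b : Fin I.k × Fin I.k),
          Edge.shortcut (S.σ i) g (S.lab i) b ∈ P) ∨
      (∃ (g : Fin I.m) (b : Fin I.k × Fin I.k),
        Mout = [Edge.shortcut (S.σ i) g (S.lab i) b] ∧
        out = (g : ℕ) - ((S.σ i : Fin I.m) : ℕ) - 1 ∧ v = Node.tl g b)) :
    (inn : ℝ≥0∞) + p (S.σ i) (S.lab i) + (out : ℝ≥0∞) ≤
      2 * ((inn : ℝ≥0∞) + (out : ℝ≥0∞) + 1) ∧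
    p (S.σ i) (S.lab i) ≤ 2 + (inn : ℝ≥0∞) + (out : ℝ≥0∞) := by
  have hok := hsplit.2.2.1.edgeOK_of_mem
  obtain ⟨hcMin, x, hx, pre, hpre, hcpre⟩ := exists_free_walk_of_entering p
    (fun e he => hok e (by simp [he])) (hinn.imp (fun h => ⟨h.1, h.2.1, h.2.2.1⟩) id)
  obtain ⟨hcMout, y, hy, post, hpost, hcpost⟩ := exists_free_walk_of_exiting p
    (fun e he => hok e (by simp [he])) (hout.imp (fun h => ⟨h.1, h.2.1, h.2.2.1⟩) id)
  obtain ⟨skips, hskips, hcskips⟩ := exists_walk_bd_cost_eq p (inn + out + 1) x y (by omega)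
  have hle := hP.1.cost_le_of_splitsAt p hsplit ((hpre.append hskips).append hpost)
  simp only [cost_append, cost_cons, cost_nil, edgeCost_price, hcMin, hcMout, hcpre, hcpost,
    hcskips, add_zero, zero_add, Nat.cast_add, Nat.cast_one] at hle
  exact ⟨hle, ENNReal.le_two_add_add_of_add_add_le (by simp) (by simp) hle⟩

/-- inequality (2): Let `σ α, …, σ ω` be an island of significant
gadgets for the purchased minimum-cost `s`-`t` path `P` and let `α ≤ i ≤ ω`.
The segment of `P` between the start node of the shortcut entering gadget `σ i`
and the end node of the shortcut exiting `σ i` consists of the optional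
entering shortcut (of length `in_i`), the P-edge of `σ i` (of price `p_{σ i}`)
and the optional exiting shortcut (of length `out_i`). Then
`in_i + p_{σ i} + out_i ≤ 2 (in_i + out_i + 1)`, the right-hand side being the
cost of the alternative path bypassing both shortcuts and gadget `σ i` using
only fixed-cost edges of cost `2`; in particular `p_{σ i} ≤ 2 + in_i + out_i`. -/
theorem stackSP_eqn2 (I : LabelCover) (p : Pricing I) (P : List (Edge I.m I.k))
    (hP : I.IsPurchased p P) (hoff : I.OffPathInfty p P)
    (S : I.SigSeq P) (α ω : Fin S.r) (hisl : S.IsIsland α ω)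
    (i : Fin S.r) (hαi : α ≤ i) (hiω : i ≤ ω)
    (P1 Min Mout P2 : List (Edge I.m I.k)) (inn out : ℕ) (u v : Node I.m I.k)
    (hsplit : I.SplitsAt P P1 (Min ++ [Edge.price (S.σ i) (S.lab i)] ++ Mout) P2 u v)
    (hinn : (Min = [Edge.enter (S.σ i) (S.lab i)] ∧ inn = 0 ∧
        u = Node.bd (S.σ i).castSucc ∧
        ¬ ∃ (g : Fin I.m) (a : Fin I.k × Fin I.k),
          Edge.shortcut g (S.σ i) a (S.lab i) ∈ P) ∨
      (∃ (g : Fin I.m) (a : Fin I.k × Fin I.k),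
        Min = [Edge.shortcut g (S.σ i) a (S.lab i)] ∧
        inn = ((S.σ i : Fin I.m) : ℕ) - (g : ℕ) - 1 ∧ u = Node.hd g a))
    (hout : (Mout = [Edge.exit (S.σ i) (S.lab i)] ∧ out = 0 ∧
        v = Node.bd (S.σ i).succ ∧
        ¬ ∃ (g : Fin I.m) (b : Fin I.k × Fin I.k),
          Edge.shortcut (S.σ i) g (S.lab i) b ∈ P) ∨
      (∃ (g : Fin I.m) (b : Fin I.k × Fin I.k),
        Mout = [Edge.shortcut (S.σ i) g (S.lab i) b] ∧
        out = (g : ℕ) - ((S.σ i : Fin I.m) : ℕ) - 1 ∧ v = Node.tl g b)) :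
    (inn : ℝ≥0∞) + p (S.σ i) (S.lab i) + (out : ℝ≥0∞) ≤
      2 * ((inn : ℝ≥0∞) + (out : ℝ≥0∞) + 1) ∧
    p (S.σ i) (S.lab i) ≤ 2 + (inn : ℝ≥0∞) + (out : ℝ≥0∞) :=
  stackSP_eqn2_general I p P hP S i P1 Min Mout P2 inn out u v hsplit hinn hout
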